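/- (Lemma 5.6, covariance decay of the truncated kernel.) Under Assumption HYP, there exists a constant C > 0 such that for every M ≥ 1, |Cov(h̄_M(ξ₁,ξ₂), h̄_M(ξ₁,ξ₃))| ≤ C·M^{2 − 3β/2}, where h̄_M(x,y) := h(x,y)·1_{|h(x,y)| ≤ M} and ξ₁, ξ₂, ξ₃ are i.i.d. -/

import Mathlib

/-!
Let `m = E h̄_M(ξ₁,ξ₂)` and `T = E[h̄_M(ξ₁,ξ₂) h̄_M(ξ₁,ξ₃)]`, so the covariance is `T - m²`.
The regular variation of the tails of `h` gives `P(|h| ≥ z) ≤ K max(1,z)^{-β}`.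

If `β < 4/3`, then `q = 3β/4 < min(1, γ)`. The layer-cake formula `E|X| = ∫₀^M P(|X| > t) dt`
for `|X| ≤ M`, with tails bounded by `K t^{-q}`, gives `|m| = O(M^{1-q})`; its two-variable
version `E|XY| = ∫∫ P(|X| > s, |Y| > t) ds dt`, with HYP(iv), gives `|T| = O(M^{2-2q})`.

If `β ≥ 4/3`, the covariance does not change when the constant `a = β/(β-1)(c₀-c₁)M^{1-β}` is
added to both factors, so `T - m² = E[(h̄_M(ξ₁,ξ₂) + a)(h̄_M(ξ₁,ξ₃) + a)] - (m + a)²`.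
The first term is `O(M^{-2θ'})` by HYP(vi); as `E h = 0`, `|m| ≤ E[|h|; |h| > M] = O(M^{1-β})`,
and so is `a`.
-/

open MeasureTheory ProbabilityTheory Filter Topology

/-- Assumption HYP of Franke–Pène–Wendler, stated for the common law `μ` of the i.i.d.
scenery: items (i)–(vii). -/
structure HypHYP {E : Type*} [MeasurableSpace E] (μ : Measure E) (h : E → E → ℝ)
    (β c₀ c₁ : ℝ) : Prop where
  beta_mem : β ∈ Set.Ioo (0:ℝ) 2
  diag : ∀ x, h x x = 0
  symm : ∀ x y, h x y = h y x
  c₀_nonneg : 0 ≤ c₀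
  c₁_nonneg : 0 ≤ c₁
  c_pos : 0 < c₀ + c₁
  tail_pos : Filter.Tendsto
    (fun z : ℝ => z ^ β * ((μ.prod μ) {p : E × E | z ≤ h p.1 p.2}).toReal)
      Filter.atTop (nhds c₀)
  tail_neg : Filter.Tendsto
    (fun z : ℝ => z ^ β * ((μ.prod μ) {p : E × E | h p.1 p.2 ≤ -z}).toReal)
      Filter.atTop (nhds c₁)
  pair_tail : ∃ C₀ > (0:ℝ), ∃ γ > 3*β/4, ∀ z z' : ℝ, 0 < z → 0 < z' →
      ((μ.prod (μ.prod μ))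
          {p : E × E × E | z ≤ |h p.1 p.2.1| ∧ z' ≤ |h p.1 p.2.2|}).toReal
        ≤ C₀ * (max 1 z * max 1 z') ^ (-γ)
  mean_zero : 1 < β → ∫ p : E × E, h p.1 p.2 ∂(μ.prod μ) = 0
  corr_bound : 4/3 ≤ β → ∃ C₀' > (0:ℝ), ∃ θ' > 3*β/4 - 1, ∀ M M' : ℝ, 0 < M → 0 < M' →
      |∫ p : E × E × E,
          ((if |h p.1 p.2.1| ≤ M then h p.1 p.2.1 else 0) + β/(β-1)*(c₀-c₁)*M^(1-β)) *
          ((if |h p.1 p.2.2| ≤ M' then h p.1 p.2.2 else 0) + β/(β-1)*(c₀-c₁)*M'^(1-β))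
        ∂(μ.prod (μ.prod μ))|
        ≤ C₀' * (M*M') ^ (-θ')
  beta_one : β = 1 → c₀ = c₁ ∧
      Filter.Tendsto (fun M : ℝ => ∫ p : E × E,
        (if |h p.1 p.2| ≤ M then h p.1 p.2 else 0) ∂(μ.prod μ)) Filter.atTop (nhds 0)

open Set

lemma lintegral_Ioo_rpow_neg {q M : ℝ} (hq : q < 1) (hM : 0 ≤ M) :
    ∫⁻ s in Ioo 0 M, ENNReal.ofReal (s ^ (-q)) = ENNReal.ofReal (M ^ (1 - q) / (1 - q)) := by
  have hint : IntegrableOn (fun s : ℝ ↦ s ^ (-q)) (Ioc 0 M) :=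
    (intervalIntegrable_iff_integrableOn_Ioc_of_le hM).1
      (intervalIntegral.intervalIntegrable_rpow' (by linarith))
  rw [← ofReal_integral_eq_lintegral_ofReal (hint.mono_set Ioo_subset_Ioc_self)
    ((ae_restrict_mem measurableSet_Ioo).mono fun s hs ↦ Real.rpow_nonneg hs.1.le _),
    ← integral_Ioc_eq_integral_Ioo, ← intervalIntegral.integral_of_le hM,
    integral_rpow (Or.inl (by linarith)), Real.zero_rpow (by linarith), neg_add_eq_sub, sub_zero]

lemma lintegral_Ioi_rpow_neg_max {M K b : ℝ} (hM : 0 < M) (hK : 0 ≤ K) (hb : 1 < b) :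
    ∫⁻ t in Ioi 0, ENNReal.ofReal (K * max M t ^ (-b))
      = ENNReal.ofReal (K * b / (b - 1) * M ^ (1 - b)) := by
  have hconst : ∫⁻ t in Ioc 0 M, ENNReal.ofReal (K * max M t ^ (-b))
      = ENNReal.ofReal (K * M ^ (1 - b)) := by
    rw [setLIntegral_congr_fun measurableSet_Ioc fun t ht ↦ by rw [max_eq_left ht.2],
      setLIntegral_const, Real.volume_Ioc, sub_zero, ← ENNReal.ofReal_mul (by positivity),
      mul_assoc, ← Real.rpow_add_one hM.ne', neg_add_eq_sub]
  have htail : ∫⁻ t in Ioi M, ENNReal.ofReal (K * max M t ^ (-b))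
      = ENNReal.ofReal (K * (M ^ (1 - b) / (b - 1))) := by
    rw [setLIntegral_congr_fun measurableSet_Ioi fun t ht ↦ by rw [max_eq_right ht.le],
      ← ofReal_integral_eq_lintegral_ofReal
        ((integrableOn_Ioi_rpow_of_lt (by linarith) hM).const_mul K)
        ((ae_restrict_mem measurableSet_Ioi).mono fun t ht ↦
          mul_nonneg hK (Real.rpow_nonneg (hM.trans ht).le _)),
      integral_const_mul, integral_Ioi_rpow_of_lt (by linarith) hM, neg_add_eq_sub,
      neg_div, ← div_neg, neg_sub]
  rw [← Ioc_union_Ioi_eq_Ioi hM.le, lintegral_union measurableSet_Ioi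
    (Ioc_disjoint_Ioi le_rfl), hconst, htail, ← ENNReal.ofReal_add (by positivity)
    (mul_nonneg hK (div_nonneg (by positivity) (by linarith)))]
  have hb1 : b - 1 ≠ 0 := by linarith
  congr 1
  field_simp
  ring

lemma rpow_neg_max_one_le_rpow_neg {s p q : ℝ} (hs : 0 < s) (hq : 0 ≤ q) (hqp : q ≤ p) :
    max 1 s ^ (-p) ≤ s ^ (-q) :=
  calc max 1 s ^ (-p) ≤ max 1 s ^ (-q) :=
        Real.rpow_le_rpow_of_exponent_le (le_max_left _ _) (by linarith)
    _ ≤ s ^ (-q) := Real.rpow_le_rpow_of_nonpos hs (le_max_right _ _) (by linarith)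

lemma exists_le_mul_max_one_rpow_neg {φ : ℝ → ℝ} {β B : ℝ} (hβ : 0 < β)
    (hφ : ∀ z, φ z ≤ 1) (hB : ∀ᶠ z in atTop, z ^ β * φ z ≤ B) :
    ∃ K, 0 ≤ K ∧ ∀ z > 0, φ z ≤ K * max 1 z ^ (-β) := by
  obtain ⟨z₀, hz₀⟩ := eventually_atTop.1 hB
  set z₁ := max 1 z₀
  have hz₁ : 0 < z₁ := lt_max_of_lt_left one_pos
  refine ⟨max B 0 + z₁ ^ β, by positivity, fun z hz ↦ ?_⟩
  rcases le_or_gt z₁ z with hz₁z | hzz₁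
  · have hmax : max 1 z = z := max_eq_right ((le_max_left _ _).trans hz₁z)
    calc φ z = z ^ (-β) * (z ^ β * φ z) := by
          rw [← mul_assoc, ← Real.rpow_add hz, neg_add_cancel, Real.rpow_zero, one_mul]
      _ ≤ z ^ (-β) * (max B 0 + z₁ ^ β) := by
          gcongr
          exact (hz₀ z ((le_max_right _ _).trans hz₁z)).trans
            ((le_max_left _ _).trans (le_add_of_nonneg_right (by positivity)))
      _ = (max B 0 + z₁ ^ β) * max 1 z ^ (-β) := by rw [hmax, mul_comm]
  · calc φ z ≤ z₁ ^ β * z₁ ^ (-β) := by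
          rw [← Real.rpow_add hz₁, add_neg_cancel, Real.rpow_zero]; exact hφ z
      _ ≤ (max B 0 + z₁ ^ β) * max 1 z ^ (-β) := by
          refine mul_le_mul (le_add_of_nonneg_left (le_max_right _ _))
            (Real.rpow_le_rpow_of_nonpos (by positivity) (max_le (le_max_left _ _) hzz₁.le)
              (by linarith)) (by positivity) (by positivity)

lemma exists_measureReal_abs_ge_le {Ω : Type*} [MeasurableSpace Ω] {P : Measure Ω}
    [IsProbabilityMeasure P] {X : Ω → ℝ} {β c₀ c₁ : ℝ} (hβ : 0 < β)
    (h₀ : Tendsto (fun z ↦ z ^ β * P.real {ω | z ≤ X ω}) atTop (𝓝 c₀))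
    (h₁ : Tendsto (fun z ↦ z ^ β * P.real {ω | X ω ≤ -z}) atTop (𝓝 c₁)) :
    ∃ K, 0 ≤ K ∧ ∀ z > 0, P.real {ω | z ≤ |X ω|} ≤ K * max 1 z ^ (-β) := by
  refine exists_le_mul_max_one_rpow_neg (B := c₀ + c₁ + 1) hβ (fun z ↦ measureReal_le_one) ?_
  filter_upwards [(h₀.add h₁).eventually (eventually_le_nhds (lt_add_one (c₀ + c₁))),
    eventually_ge_atTop 0] with z hz hz0
  refine le_trans ?_ hz
  rw [← mul_add]
  gcongr
  refine (measureReal_mono fun ω hω ↦ ?_).trans (measureReal_union_le _ _)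
  rcases le_abs'.1 (show z ≤ |X ω| from hω) with h | h
  exacts [Or.inr h, Or.inl h]

lemma lintegral_ofReal_abs_mul_eq_lintegral_measure {α : Type*} [MeasurableSpace α]
    {P : Measure α} [SFinite P] {F G : α → ℝ} (hF : Measurable F) (hG : Measurable G) :
    ∫⁻ a, ENNReal.ofReal |F a * G a| ∂P = ∫⁻ q : ℝ × ℝ,
      P {a | 0 < q.1 ∧ q.1 < |F a| ∧ 0 < q.2 ∧ q.2 < |G a|}
        ∂((volume : Measure ℝ).prod volume) := by
  set A : Set ((ℝ × ℝ) × α) :=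
    {q | 0 < q.1.1 ∧ q.1.1 < |F q.2| ∧ 0 < q.1.2 ∧ q.1.2 < |G q.2|}
  have hA : MeasurableSet A := by
    refine (measurableSet_lt measurable_const measurable_fst.fst).inter
      ((measurableSet_lt measurable_fst.fst (hF.comp measurable_snd).abs).inter
      ((measurableSet_lt measurable_const measurable_fst.snd).inter
      (measurableSet_lt measurable_fst.snd (hG.comp measurable_snd).abs)))
  -- Tonelli: `|F a * G a|` is the area of the section of `A` over `a`.
  have harea : ∀ a, ENNReal.ofReal |F a * G a|
      = ((volume : Measure ℝ).prod volume) ((fun q ↦ (q, a)) ⁻¹' A) := fun a ↦ by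
    rw [show (fun q ↦ (q, a)) ⁻¹' A = Ioo 0 |F a| ×ˢ Ioo 0 |G a| by ext; simp [A]; tauto,
      Measure.prod_prod, Real.volume_Ioo, Real.volume_Ioo, sub_zero, sub_zero,
      ← ENNReal.ofReal_mul (abs_nonneg _), abs_mul]
  simp_rw [harea]
  rw [← Measure.prod_apply_symm hA, Measure.prod_apply hA]
  rfl

section LayerCake

variable {α : Type*} [MeasurableSpace α] {P : Measure α} [IsFiniteMeasure P]

lemma measure_le_ofReal_of_measureReal_le {s : Set α} {r : ℝ} (h : P.real s ≤ r) :
    P s ≤ ENNReal.ofReal r :=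
  ofReal_measureReal (measure_ne_top P s) ▸ ENNReal.ofReal_le_ofReal h

lemma integral_abs_le_of_measureReal_lt_abs_le {f : α → ℝ} (hf : AEMeasurable f P)
    {M K q : ℝ} (hM : 0 ≤ M) (hK : 0 ≤ K) (hq : q < 1) (hfM : ∀ a, |f a| ≤ M)
    (htail : ∀ t > 0, P.real {a | t < |f a|} ≤ K * t ^ (-q)) :
    ∫ a, |f a| ∂P ≤ K * (M ^ (1 - q) / (1 - q)) := by
  have hvanish : ∀ t ∈ Ici M, P {a | t < |f a|} = 0 := fun t ht ↦ by
    rw [show {a | t < |f a|} = ∅ from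
      eq_empty_of_forall_notMem fun a ha ↦ not_lt.2 ((hfM a).trans ht) ha, measure_empty]
  have hlint : ∫⁻ a, ENNReal.ofReal |f a| ∂P ≤ ENNReal.ofReal (K * (M ^ (1 - q) / (1 - q))) :=
    calc ∫⁻ a, ENNReal.ofReal |f a| ∂P = ∫⁻ t in Ioi 0, P {a | t < |f a|} :=
          lintegral_eq_lintegral_meas_lt P (ae_of_all _ fun a ↦ abs_nonneg _) hf.abs
      _ ≤ ∫⁻ t in Ioo 0 M ∪ Ici M, P {a | t < |f a|} :=
          lintegral_mono_set fun t ht ↦ (lt_or_ge t M).imp (fun h ↦ ⟨ht, h⟩) id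
      _ ≤ (∫⁻ t in Ioo 0 M, P {a | t < |f a|}) + ∫⁻ t in Ici M, P {a | t < |f a|} :=
          lintegral_union_le _ _ _
      _ = ∫⁻ t in Ioo 0 M, P {a | t < |f a|} := by
          rw [setLIntegral_eq_zero measurableSet_Ici hvanish, add_zero]
      _ ≤ ∫⁻ t in Ioo 0 M, ENNReal.ofReal K * ENNReal.ofReal (t ^ (-q)) :=
          setLIntegral_mono (by fun_prop) fun t ht ↦ by
            rw [← ENNReal.ofReal_mul hK]
            exact measure_le_ofReal_of_measureReal_le (htail t ht.1)
      _ = ENNReal.ofReal (K * (M ^ (1 - q) / (1 - q))) := by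
          rw [lintegral_const_mul _ (by fun_prop), lintegral_Ioo_rpow_neg hq hM,
            ← ENNReal.ofReal_mul hK]
  rw [integral_eq_lintegral_of_nonneg_ae (ae_of_all _ fun a ↦ abs_nonneg _)
    hf.abs.aestronglyMeasurable]
  exact ENNReal.toReal_le_of_le_ofReal
    (mul_nonneg hK (div_nonneg (by positivity) (by linarith))) hlint

lemma integrable_and_integral_abs_le_of_measureReal_lt_abs_le {f : α → ℝ}
    (hf : AEMeasurable f P) {M K b : ℝ} (hM : 0 < M) (hK : 0 ≤ K) (hb : 1 < b)
    (htail : ∀ t > 0, P.real {a | t < |f a|} ≤ K * max M t ^ (-b)) :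
    Integrable f P ∧ ∫ a, |f a| ∂P ≤ K * b / (b - 1) * M ^ (1 - b) := by
  have hlint : ∫⁻ a, ENNReal.ofReal |f a| ∂P ≤ ENNReal.ofReal (K * b / (b - 1) * M ^ (1 - b)) :=
    calc ∫⁻ a, ENNReal.ofReal |f a| ∂P = ∫⁻ t in Ioi 0, P {a | t < |f a|} :=
          lintegral_eq_lintegral_meas_lt P (ae_of_all _ fun a ↦ abs_nonneg _) hf.abs
      _ ≤ ∫⁻ t in Ioi 0, ENNReal.ofReal (K * max M t ^ (-b)) :=
          setLIntegral_mono (by fun_prop) fun t ht ↦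
            measure_le_ofReal_of_measureReal_le (htail t ht)
      _ = ENNReal.ofReal (K * b / (b - 1) * M ^ (1 - b)) := lintegral_Ioi_rpow_neg_max hM hK hb
  refine ⟨⟨hf.aestronglyMeasurable, (hasFiniteIntegral_iff_norm f).2 ?_⟩, ?_⟩
  · exact hlint.trans_lt ENNReal.ofReal_lt_top
  · rw [integral_eq_lintegral_of_nonneg_ae (ae_of_all _ fun a ↦ abs_nonneg _)
      hf.abs.aestronglyMeasurable]
    exact ENNReal.toReal_le_of_le_ofReal
      (mul_nonneg (div_nonneg (by positivity) (by linarith)) (by positivity)) hlint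

lemma integral_abs_mul_le_of_measureReal_lt_abs_and_lt_abs_le {F G : α → ℝ}
    (hF : Measurable F) (hG : Measurable G) {M C g : ℝ} (hM : 0 ≤ M) (hC : 0 ≤ C) (hg : g < 1)
    (hFM : ∀ a, |F a| ≤ M) (hGM : ∀ a, |G a| ≤ M)
    (htail : ∀ s > 0, ∀ t > 0,
      P.real {a | s < |F a| ∧ t < |G a|} ≤ C * (s ^ (-g) * t ^ (-g))) :
    ∫ a, |F a * G a| ∂P ≤ C * (M ^ (1 - g) / (1 - g)) ^ 2 := by
  have hsection : ∀ q : ℝ × ℝ, P {a | 0 < q.1 ∧ q.1 < |F a| ∧ 0 < q.2 ∧ q.2 < |G a|}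
      ≤ (Ioo 0 M ×ˢ Ioo 0 M).indicator (fun q ↦ ENNReal.ofReal C *
        (ENNReal.ofReal (q.1 ^ (-g)) * ENNReal.ofReal (q.2 ^ (-g)))) q := by
    intro q
    by_cases hq : q ∈ Ioo 0 M ×ˢ Ioo 0 M
    · rw [indicator_of_mem hq, ← ENNReal.ofReal_mul (Real.rpow_nonneg hq.1.1.le _),
        ← ENNReal.ofReal_mul hC]
      exact (measure_mono (t := {a | q.1 < |F a| ∧ q.2 < |G a|})
        fun a ha ↦ ⟨ha.2.1, ha.2.2.2⟩).trans
        (measure_le_ofReal_of_measureReal_le (htail _ hq.1.1 _ hq.2.1))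
    · rw [indicator_of_notMem hq, show {a | 0 < q.1 ∧ q.1 < |F a| ∧ 0 < q.2 ∧ q.2 < |G a|} = ∅
        from eq_empty_of_forall_notMem fun a ⟨h₁, h₂, h₃, h₄⟩ ↦
          hq ⟨⟨h₁, h₂.trans_le (hFM a)⟩, h₃, h₄.trans_le (hGM a)⟩, measure_empty]
  have hlint : ∫⁻ a, ENNReal.ofReal |F a * G a| ∂P
      ≤ ENNReal.ofReal (C * (M ^ (1 - g) / (1 - g)) ^ 2) :=
    calc ∫⁻ a, ENNReal.ofReal |F a * G a| ∂P
        ≤ ∫⁻ q : ℝ × ℝ, (Ioo 0 M ×ˢ Ioo 0 M).indicator (fun q ↦ ENNReal.ofReal C *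
            (ENNReal.ofReal (q.1 ^ (-g)) * ENNReal.ofReal (q.2 ^ (-g)))) q
            ∂((volume : Measure ℝ).prod volume) := by
          rw [lintegral_ofReal_abs_mul_eq_lintegral_measure hF hG]
          exact lintegral_mono hsection
      _ = ENNReal.ofReal C * (∫⁻ s in Ioo 0 M, ENNReal.ofReal (s ^ (-g))) ^ 2 := by
          rw [lintegral_indicator (measurableSet_Ioo.prod measurableSet_Ioo),
            lintegral_const_mul _ (by fun_prop), ← Measure.prod_restrict,
            lintegral_prod_mul (f := fun s ↦ ENNReal.ofReal (s ^ (-g)))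
              (g := fun s ↦ ENNReal.ofReal (s ^ (-g))) (by fun_prop) (by fun_prop), sq]
      _ = ENNReal.ofReal (C * (M ^ (1 - g) / (1 - g)) ^ 2) := by
          rw [lintegral_Ioo_rpow_neg hg hM, ← ENNReal.ofReal_pow
            (div_nonneg (by positivity) (by linarith)), ← ENNReal.ofReal_mul hC]
  rw [integral_eq_lintegral_of_nonneg_ae (ae_of_all _ fun a ↦ abs_nonneg _)
    (by fun_prop : Measurable fun a ↦ |F a * G a|).aestronglyMeasurable]
  exact ENNReal.toReal_le_of_le_ofReal
    (mul_nonneg hC (pow_nonneg (div_nonneg (by positivity) (by linarith)) 2)) hlint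

end LayerCake

section Marginals

variable {α β γ : Type*} [MeasurableSpace α] [MeasurableSpace β] [MeasurableSpace γ]
  {μ : Measure α} {ν : Measure β} {ρ : Measure γ} [SFinite μ]

lemma integral_comp_fst_snd_fst [SFinite ν] [IsProbabilityMeasure ρ] {f : α × β → ℝ}
    (hf : AEStronglyMeasurable f (μ.prod ν)) :
    ∫ p, f (p.1, p.2.1) ∂(μ.prod (ν.prod ρ)) = ∫ q, f q ∂(μ.prod ν) := by
  have hmp : MeasurePreserving (fun p : α × β × γ ↦ (p.1, p.2.1)) (μ.prod (ν.prod ρ)) (μ.prod ν) :=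
    (MeasurePreserving.id μ).prod measurePreserving_fst
  rw [← integral_map hmp.measurable.aemeasurable (by rwa [hmp.map_eq]), hmp.map_eq]

lemma integral_comp_fst_snd_snd [IsProbabilityMeasure ν] [SFinite ρ] {f : α × γ → ℝ}
    (hf : AEStronglyMeasurable f (μ.prod ρ)) :
    ∫ p, f (p.1, p.2.2) ∂(μ.prod (ν.prod ρ)) = ∫ q, f q ∂(μ.prod ρ) := by
  have hmp : MeasurePreserving (fun p : α × β × γ ↦ (p.1, p.2.2)) (μ.prod (ν.prod ρ)) (μ.prod ρ) :=
    (MeasurePreserving.id μ).prod measurePreserving_snd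
  rw [← integral_map hmp.measurable.aemeasurable (by rwa [hmp.map_eq]), hmp.map_eq]

end Marginals

lemma integral_mul_sub_sq_eq_integral_add_mul_add_sub_sq {Ω : Type*} [MeasurableSpace Ω]
    {P : Measure Ω} [IsProbabilityMeasure P] {X Y : Ω → ℝ} (hX : MemLp X 2 P) (hY : MemLp Y 2 P)
    {m : ℝ} (hXm : ∫ ω, X ω ∂P = m) (hYm : ∫ ω, Y ω ∂P = m) (a : ℝ) :
    ∫ ω, X ω * Y ω ∂P - m ^ 2 = ∫ ω, (X ω + a) * (Y ω + a) ∂P - (m + a) ^ 2 := by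
  have hXa : ∫ ω, X ω + a ∂P = m + a := by
    rw [integral_add (hX.integrable one_le_two) (integrable_const a), hXm, integral_const,
      probReal_univ, one_smul]
  have hYa : ∫ ω, Y ω + a ∂P = m + a := by
    rw [integral_add (hY.integrable one_le_two) (integrable_const a), hYm, integral_const,
      probReal_univ, one_smul]
  calc ∫ ω, X ω * Y ω ∂P - m ^ 2 = cov[X, Y; P] := by
        rw [covariance_eq_sub hX hY, hXm, hYm, sq]; rfl
    _ = cov[fun ω ↦ X ω + a, fun ω ↦ Y ω + a; P] := by
        rw [covariance_add_const_left (hX.integrable one_le_two),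
          covariance_add_const_right (hY.integrable one_le_two)]
    _ = ∫ ω, (X ω + a) * (Y ω + a) ∂P - (m + a) ^ 2 := by
        rw [covariance_eq_sub (X := fun ω ↦ X ω + a) (Y := fun ω ↦ Y ω + a)
          (hX.add (memLp_const a)) (hY.add (memLp_const a)), hXa, hYa, sq]
        rfl

noncomputable def truncate (M x : ℝ) : ℝ := if |x| ≤ M then x else 0

lemma abs_truncate_le {M : ℝ} (hM : 0 ≤ M) (x : ℝ) : |truncate M x| ≤ M := by
  unfold truncate; split_ifs with hx <;> simp [hx, hM]

lemma abs_truncate_le_abs (M x : ℝ) : |truncate M x| ≤ |x| := by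
  unfold truncate; split_ifs <;> simp

lemma measurable_truncate (M : ℝ) : Measurable (truncate M) :=
  Measurable.ite (measurableSet_le measurable_id.abs measurable_const) measurable_id
    measurable_const

lemma Measurable.truncate {Ω : Type*} [MeasurableSpace Ω] {X : Ω → ℝ} (hX : Measurable X)
    (M : ℝ) : Measurable fun ω ↦ truncate M (X ω) :=
  (measurable_truncate M).comp hX

lemma max_le_abs_of_lt_abs_sub_truncate {M t x : ℝ} (ht : 0 ≤ t) (h : t < |x - truncate M x|) :
    max M t ≤ |x| := by
  unfold truncate at h
  split_ifs at h with hx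
  · rw [sub_self, abs_zero] at h; linarith
  · rw [sub_zero] at h; exact max_le (not_le.1 hx).le h.le

section TruncatedMoments

variable {Ω : Type*} [MeasurableSpace Ω] {P : Measure Ω} [IsFiniteMeasure P] {X : Ω → ℝ}
  {K β M : ℝ}

lemma memLp_truncate_comp (hX : Measurable X) (hM : 0 ≤ M) (p : ENNReal) :
    MemLp (fun ω ↦ truncate M (X ω)) p P :=
  .of_bound (hX.truncate M).aestronglyMeasurable M
    (ae_of_all _ fun ω ↦ abs_truncate_le hM (X ω))

lemma abs_integral_truncate_le (hX : Measurable X) (hK0 : 0 ≤ K)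
    (hK : ∀ z > 0, P.real {ω | z ≤ |X ω|} ≤ K * max 1 z ^ (-β)) {q : ℝ} (hq0 : 0 ≤ q)
    (hqβ : q ≤ β) (hq1 : q < 1) (hM : 0 ≤ M) :
    |∫ ω, truncate M (X ω) ∂P| ≤ K * (M ^ (1 - q) / (1 - q)) :=
  (abs_integral_le_integral_abs).trans <|
    integral_abs_le_of_measureReal_lt_abs_le (hX.truncate M).aemeasurable
      hM hK0 hq1 (fun ω ↦ abs_truncate_le hM (X ω)) fun t ht ↦
        (measureReal_mono fun ω hω ↦ (lt_of_lt_of_le hω (abs_truncate_le_abs M (X ω))).le).trans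
          ((hK t ht).trans
            (mul_le_mul_of_nonneg_left (rpow_neg_max_one_le_rpow_neg ht hq0 hqβ) hK0))

lemma abs_integral_truncate_le_of_integral_eq_zero (hX : Measurable X) (hK0 : 0 ≤ K)
    (hK : ∀ z > 0, P.real {ω | z ≤ |X ω|} ≤ K * max 1 z ^ (-β)) (hβ : 1 < β) (hM : 1 ≤ M)
    (hmean : ∫ ω, X ω ∂P = 0) :
    |∫ ω, truncate M (X ω) ∂P| ≤ K * β / (β - 1) * M ^ (1 - β) := by
  have htail : ∀ t > 0, P.real {ω | t < |X ω - truncate M (X ω)|} ≤ K * max M t ^ (-β) :=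
    fun t ht ↦ (measureReal_mono fun ω hω ↦ max_le_abs_of_lt_abs_sub_truncate ht.le hω).trans <|
      (hK _ (by positivity)).trans_eq <| by
        rw [max_eq_right ((le_max_left M t).trans' hM)]
  obtain ⟨hint, hbound⟩ := integrable_and_integral_abs_le_of_measureReal_lt_abs_le
    (hX.sub (hX.truncate M)).aemeasurable (zero_lt_one.trans_le hM) hK0 hβ htail
  have htrunc : Integrable (fun ω ↦ truncate M (X ω)) P :=
    (memLp_truncate_comp hX (by linarith) 1).integrable le_rfl
  have hX_int : Integrable X P :=
    (hint.add htrunc).congr (ae_of_all _ fun ω ↦ sub_add_cancel _ _)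
  rw [show ∫ ω, truncate M (X ω) ∂P = -∫ ω, X ω - truncate M (X ω) ∂P by
    rw [integral_sub hX_int htrunc, hmean, zero_sub, neg_neg], abs_neg]
  exact (abs_integral_le_integral_abs).trans hbound

lemma abs_integral_truncate_mul_truncate_le {Y : Ω → ℝ} (hX : Measurable X) (hY : Measurable Y)
    {C₀ γ g : ℝ} (hC₀ : 0 ≤ C₀) (hg0 : 0 ≤ g) (hgγ : g ≤ γ) (hg1 : g < 1) (hM : 0 ≤ M)
    (hpair : ∀ s t : ℝ, 0 < s → 0 < t →
      P.real {ω | s ≤ |X ω| ∧ t ≤ |Y ω|} ≤ C₀ * (max 1 s * max 1 t) ^ (-γ)) :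
    |∫ ω, truncate M (X ω) * truncate M (Y ω) ∂P| ≤ C₀ * (M ^ (1 - g) / (1 - g)) ^ 2 := by
  refine (abs_integral_le_integral_abs).trans <|
    integral_abs_mul_le_of_measureReal_lt_abs_and_lt_abs_le (hX.truncate M)
      (hY.truncate M) hM hC₀ hg1 (fun ω ↦ abs_truncate_le hM (X ω))
      (fun ω ↦ abs_truncate_le hM (Y ω)) fun s hs t ht ↦ ?_
  refine (measureReal_mono (s₂ := {ω | s ≤ |X ω| ∧ t ≤ |Y ω|}) fun ω hω ↦
      ⟨(hω.1.trans_le (abs_truncate_le_abs M (X ω))).le,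
        (hω.2.trans_le (abs_truncate_le_abs M (Y ω))).le⟩).trans <|
    (hpair s t hs ht).trans ?_
  rw [Real.mul_rpow (by positivity) (by positivity)]
  gcongr
  exacts [rpow_neg_max_one_le_rpow_neg hs hg0 hgγ, rpow_neg_max_one_le_rpow_neg ht hg0 hgγ]

end TruncatedMoments

section Kernel

variable {E : Type*} [MeasurableSpace E] {μ : Measure E} [IsProbabilityMeasure μ]
  {h : E → E → ℝ} {β c₀ c₁ K : ℝ}

/-- `Cov(h̄_M(ξ₁,ξ₂), h̄_M(ξ₁,ξ₃))`: both factors have mean `∫ h̄_M d(μ ⊗ μ)`. -/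
noncomputable def truncatedCov (μ : Measure E) (h : E → E → ℝ) (M : ℝ) : ℝ :=
  (∫ p, truncate M (h p.1 p.2.1) * truncate M (h p.1 p.2.2) ∂(μ.prod (μ.prod μ))) -
    (∫ p, truncate M (h p.1 p.2) ∂(μ.prod μ)) ^ 2

lemma abs_truncatedCov_le_of_lt_four_thirds (hmeas : Measurable (Function.uncurry h))
    (hyp : HypHYP μ h β c₀ c₁) (hβ : β < 4 / 3) (hK0 : 0 ≤ K)
    (hK : ∀ z > 0, (μ.prod μ).real {p | z ≤ |h p.1 p.2|} ≤ K * max 1 z ^ (-β)) :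
    ∃ C > 0, ∀ M ≥ 1, |truncatedCov μ h M| ≤ C * M ^ (2 - 3 * β / 2) := by
  obtain ⟨C₀, hC₀, γ, hγ, hpair⟩ := hyp.pair_tail
  have hβ0 := hyp.beta_mem.1
  have hq1 : 0 < 1 - 3 * β / 4 := by linarith
  refine ⟨(C₀ + K ^ 2) / (1 - 3 * β / 4) ^ 2, by positivity, fun M hM ↦ ?_⟩
  have hM0 : 0 ≤ M := zero_le_one.trans hM
  have hT := abs_integral_truncate_mul_truncate_le (X := fun p : E × E × E ↦ h p.1 p.2.1)
    (Y := fun p ↦ h p.1 p.2.2) (hmeas.comp (measurable_fst.prodMk measurable_snd.fst))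
    (hmeas.comp (measurable_fst.prodMk measurable_snd.snd)) hC₀.le (by positivity) hγ.le
    (by linarith) hM0 hpair
  have hm := abs_integral_truncate_le (X := fun p : E × E ↦ h p.1 p.2) hmeas hK0 hK
    (q := 3 * β / 4) (by positivity) (by linarith) (by linarith) hM0
  calc |truncatedCov μ h M|
      ≤ C₀ * (M ^ (1 - 3 * β / 4) / (1 - 3 * β / 4)) ^ 2
        + (K * (M ^ (1 - 3 * β / 4) / (1 - 3 * β / 4))) ^ 2 :=
        (abs_sub _ _).trans (add_le_add hT (by rw [abs_pow]; gcongr))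
    _ = (C₀ + K ^ 2) / (1 - 3 * β / 4) ^ 2 * M ^ (2 - 3 * β / 2) := by
        rw [div_pow, mul_pow, div_pow, ← Real.rpow_mul_natCast hM0]
        ring_nf

lemma abs_truncatedCov_le_of_four_thirds_le (hmeas : Measurable (Function.uncurry h))
    (hyp : HypHYP μ h β c₀ c₁) (hβ : 4 / 3 ≤ β) (hK0 : 0 ≤ K)
    (hK : ∀ z > 0, (μ.prod μ).real {p | z ≤ |h p.1 p.2|} ≤ K * max 1 z ^ (-β)) :
    ∃ C > 0, ∀ M ≥ 1, |truncatedCov μ h M| ≤ C * M ^ (2 - 3 * β / 2) := by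
  have hβ1 : 1 < β := by linarith
  obtain ⟨C₀', hC₀', θ', hθ', hcorr⟩ := hyp.corr_bound hβ
  set B := K * β / (β - 1) + |β / (β - 1) * (c₀ - c₁)|
  refine ⟨C₀' + B ^ 2, by positivity, fun M hM ↦ ?_⟩
  have hM0 : 0 < M := zero_lt_one.trans_le hM
  set a := β / (β - 1) * (c₀ - c₁) * M ^ (1 - β)
  set m := ∫ p, truncate M (h p.1 p.2) ∂(μ.prod μ)
  have hm : |m + a| ≤ B * M ^ (1 - β) := by
    refine (abs_add_le _ _).trans ?_
    rw [abs_mul _ (M ^ _), abs_of_pos (Real.rpow_pos_of_pos hM0 _), add_mul]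
    gcongr
    exact abs_integral_truncate_le_of_integral_eq_zero (X := fun p : E × E ↦ h p.1 p.2) hmeas
      hK0 hK hβ1 hM (hyp.mean_zero hβ1)
  have htrunc : Measurable fun p : E × E ↦ truncate M (h p.1 p.2) := hmeas.truncate M
  have hshift : truncatedCov μ h M = ∫ p, (truncate M (h p.1 p.2.1) + a) *
      (truncate M (h p.1 p.2.2) + a) ∂(μ.prod (μ.prod μ)) - (m + a) ^ 2 :=
    integral_mul_sub_sq_eq_integral_add_mul_add_sub_sq
      (memLp_truncate_comp (hmeas.comp (measurable_fst.prodMk measurable_snd.fst)) hM0.le 2)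
      (memLp_truncate_comp (hmeas.comp (measurable_fst.prodMk measurable_snd.snd)) hM0.le 2)
      (integral_comp_fst_snd_fst (f := fun q ↦ truncate M (h q.1 q.2)) htrunc.aestronglyMeasurable)
      (integral_comp_fst_snd_snd (f := fun q ↦ truncate M (h q.1 q.2)) htrunc.aestronglyMeasurable)
      a
  rw [hshift]
  calc _ ≤ C₀' * (M * M) ^ (-θ') + (B * M ^ (1 - β)) ^ 2 :=
        (abs_sub _ _).trans (add_le_add (hcorr M M hM0 hM0) (by rw [abs_pow]; gcongr))
    _ = C₀' * M ^ (-2 * θ') + B ^ 2 * M ^ (2 - 2 * β) := by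
        rw [Real.mul_rpow hM0.le hM0.le, ← Real.rpow_add hM0, mul_pow,
          ← Real.rpow_mul_natCast hM0.le]
        ring_nf
    _ ≤ (C₀' + B ^ 2) * M ^ (2 - 3 * β / 2) := by
        rw [add_mul]
        gcongr <;> first | exact hM | linarith

end Kernel

/-- **Lemma 5.6 (covariance decay of the truncated kernel).**
Under Assumption HYP, `|Cov(h̄_M(ξ₁,ξ₂), h̄_M(ξ₁,ξ₃))| ≤ C M^{2-3β/2}` for `M ≥ 1`,
where `h̄_M = h 1_{|h| ≤ M}` and `ξ₁, ξ₂, ξ₃` are i.i.d. with law `μ`. -/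
theorem truncated_kernel_covariance_decay
    {E : Type*} [MeasurableSpace E] (μ : Measure E) [IsProbabilityMeasure μ]
    (h : E → E → ℝ) (hmeas : Measurable (Function.uncurry h))
    (β c₀ c₁ : ℝ) (hyp : HypHYP μ h β c₀ c₁) :
    ∃ C > (0:ℝ), ∀ M : ℝ, 1 ≤ M →
      |(∫ p : E × E × E,
          (if |h p.1 p.2.1| ≤ M then h p.1 p.2.1 else 0) *
          (if |h p.1 p.2.2| ≤ M then h p.1 p.2.2 else 0) ∂(μ.prod (μ.prod μ))) -
        (∫ p : E × E, (if |h p.1 p.2| ≤ M then h p.1 p.2 else 0) ∂(μ.prod μ)) ^ 2|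
      ≤ C * M ^ (2 - 3*β/2) := by
  obtain ⟨K, hK0, hK⟩ := exists_measureReal_abs_ge_le (X := fun p : E × E ↦ h p.1 p.2)
    hyp.beta_mem.1 hyp.tail_pos hyp.tail_neg
  rcases lt_or_ge β (4 / 3) with hβ | hβ
  · exact abs_truncatedCov_le_of_lt_four_thirds hmeas hyp hβ hK0 hK
  · exact abs_truncatedCov_le_of_four_thirds_le hmeas hyp hβ hK0 hK
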